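/- arXiv:2110.06070 — 2 statements merged into one kernel-verified Lean document; each statement's English description precedes it below -/
import Mathlib

section
/- Let Γ be a countable group acting on the left on a nonempty countable set X. The action of Γ on X is amenable if and only if for every ε > 0 and every finite subset G of Γ there exists a finite subset F of X such that |(g • F) \ F| < ε·|F| for every g ∈ G. -/
/-- A real-valued function is bounded. -/
def Bdd {X : Type*} (f : X → ℝ) : Prop := ∃ C : ℝ, ∀ x, |f x| ≤ C

/-- `μ` is a `Γ`-invariant mean for the action of `Γ` on `X`: an ℝ-linear functional on
the space of bounded functions `X → ℝ` lying between the infimum and the supremum, and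
invariant under the action of `Γ`. -/
def IsInvariantMean (Γ : Type*) {X : Type*} [Group Γ] [MulAction Γ X]
    (μ : (X → ℝ) → ℝ) : Prop :=
  (∀ f g : X → ℝ, Bdd f → Bdd g → μ (f + g) = μ f + μ g) ∧
  (∀ (c : ℝ) (f : X → ℝ), Bdd f → μ (c • f) = c * μ f) ∧
  (∀ f : X → ℝ, Bdd f → sInf (Set.range f) ≤ μ f ∧ μ f ≤ sSup (Set.range f)) ∧
  (∀ (g : Γ) (f : X → ℝ), Bdd f → μ (fun x => f (g • x)) = μ f)

/-- The action of `Γ` on `X` is amenable if it admits a `Γ`-invariant mean. -/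
def AmenableAction (Γ X : Type*) [Group Γ] [MulAction Γ X] : Prop :=
  ∃ μ : (X → ℝ) → ℝ, IsInvariantMean Γ μ

/-- A group is amenable if its action on itself by left multiplication is amenable. -/
def AmenableGroup (G : Type*) [Group G] : Prop := AmenableAction G G

/-!
An invariant mean gives all translates of a set the same mass, so `X` cannot contain two disjoint
copies of itself, each assembled from finitely many translated pieces of `X`. If the Følner
condition fails for `ε` and `G`, every finite set grows by the factor `1 + ε` under
`S = insert 1 G`, hence at least doubles under some power `S ^ k`; Hall's marriage theorem turns
this doubling into exactly such a pair of copies. Conversely, averages over Følner sets are almost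
invariant, and their limit along an ultrafilter is an invariant mean.
-/

open Filter Topology Finset Function
open scoped Pointwise BigOperators

namespace Bdd

variable {X : Type*}

lemma zero : Bdd (0 : X → ℝ) := ⟨0, by simp⟩

lemma add {f g : X → ℝ} (hf : Bdd f) (hg : Bdd g) : Bdd (f + g) := by
  obtain ⟨C, hC⟩ := hf
  obtain ⟨D, hD⟩ := hg
  exact ⟨C + D, fun x => (abs_add_le _ _).trans (add_le_add (hC x) (hD x))⟩

lemma sum {ι : Type*} (s : Finset ι) {f : ι → X → ℝ} (hf : ∀ i ∈ s, Bdd (f i)) :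
    Bdd (∑ i ∈ s, f i) :=
  Finset.sum_induction f Bdd (fun _ _ => add) zero hf

lemma indicator_one (A : Set X) : Bdd (A.indicator 1) :=
  ⟨1, fun x => by by_cases hx : x ∈ A <;> simp [hx]⟩

end Bdd

namespace IsInvariantMean

variable {Γ X : Type*} [Group Γ] [MulAction Γ X] {μ : (X → ℝ) → ℝ}

lemma map_zero (hμ : IsInvariantMean Γ μ) : μ 0 = 0 := by
  simpa using hμ.2.1 0 0 Bdd.zero

lemma map_sum (hμ : IsInvariantMean Γ μ) {ι : Type*} (s : Finset ι) (f : ι → X → ℝ)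
    (hf : ∀ i ∈ s, Bdd (f i)) : μ (∑ i ∈ s, f i) = ∑ i ∈ s, μ (f i) := by
  classical
  induction s using Finset.induction_on with
  | empty => simpa using hμ.map_zero
  | insert i s hi ih =>
    have hf' : ∀ j ∈ s, Bdd (f j) := fun j hj => hf j (mem_insert_of_mem hj)
    rw [sum_insert hi, sum_insert hi, hμ.1 _ _ (hf i (mem_insert_self i s)) (Bdd.sum s hf'),
      ih hf']

lemma map_one [Nonempty X] (hμ : IsInvariantMean Γ μ) : μ 1 = 1 := by
  have h := hμ.2.2.1 1 ⟨1, by simp⟩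
  rw [Pi.one_def, Set.range_const, csInf_singleton, csSup_singleton] at h
  exact le_antisymm h.2 h.1

lemma map_indicator_le_one [Nonempty X] (hμ : IsInvariantMean Γ μ) (A : Set X) :
    μ (A.indicator 1) ≤ 1 :=
  (hμ.2.2.1 _ (Bdd.indicator_one A)).2.trans <| csSup_le (Set.range_nonempty _) <| by
    rintro _ ⟨x, rfl⟩
    by_cases hx : x ∈ A <;> simp [hx]

lemma map_indicator_smul (hμ : IsInvariantMean Γ μ) (g : Γ) (A : Set X) :
    μ ((g • A).indicator 1) = μ (A.indicator 1) := by
  rw [← hμ.2.2.2 g _ (Bdd.indicator_one _)]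
  congr 1
  funext x
  by_cases hx : x ∈ A <;> simp [hx, Set.smul_mem_smul_set_iff]

lemma map_indicator_biUnion_smul (hμ : IsInvariantMean Γ μ) (K : Finset Γ) (P : Γ → Set X)
    (hP : (K : Set Γ).PairwiseDisjoint P)
    (hKP : (K : Set Γ).PairwiseDisjoint fun s => s • P s) :
    μ ((⋃ s ∈ K, s • P s).indicator 1) = μ ((⋃ s ∈ K, P s).indicator 1) := by
  have hsum {t : Γ → Set X} (ht : (K : Set Γ).PairwiseDisjoint t) :
      (⋃ s ∈ K, t s).indicator (1 : X → ℝ) = ∑ s ∈ K, (t s).indicator 1 := by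
    funext x
    rw [indicator_biUnion_apply _ _ ht, Finset.sum_apply]
  rw [hsum hKP, hsum hP, hμ.map_sum _ _ fun _ _ => Bdd.indicator_one _,
    hμ.map_sum _ _ fun _ _ => Bdd.indicator_one _]
  exact sum_congr rfl fun s _ => hμ.map_indicator_smul s (P s)

lemma map_indicator_range_eq_one [Nonempty X] (hμ : IsInvariantMean Γ μ) {K : Finset Γ}
    {σ : X → Γ} (hσ : ∀ x, σ x ∈ K) (hinj : Injective fun x => σ x • x) :
    μ ((Set.range fun x => σ x • x).indicator 1) = 1 := by
  let P : Γ → Set X := fun s => {x | σ x = s}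
  have hP : (K : Set Γ).PairwiseDisjoint P := fun s _ t _ hst =>
    Set.disjoint_left.2 fun x hs ht => hst (hs.symm.trans ht)
  have hKP : (K : Set Γ).PairwiseDisjoint fun s => s • P s := by
    rintro s - t - hst
    refine Set.disjoint_left.2 ?_
    rintro _ ⟨x, hx, rfl⟩ ⟨y, hy, hxy⟩
    change σ x = s at hx
    change σ y = t at hy
    have hyx : y = x := hinj (by simp only [hx, hy]; exact hxy)
    exact hst (hx.symm.trans (hyx ▸ hy))
  have hrange : (⋃ s ∈ K, s • P s) = Set.range fun x => σ x • x := by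
    ext y
    simp only [Set.mem_iUnion, Set.mem_smul_set, Set.mem_range, P, Set.mem_ofPred_eq]
    constructor
    · rintro ⟨s, -, x, rfl, rfl⟩
      exact ⟨x, rfl⟩
    · rintro ⟨x, rfl⟩
      exact ⟨σ x, hσ x, x, rfl, rfl⟩
  have huniv : (⋃ s ∈ K, P s) = Set.univ :=
    Set.eq_univ_of_forall fun x => Set.mem_biUnion (hσ x) rfl
  rw [← hrange, hμ.map_indicator_biUnion_smul K P hP hKP, huniv, Set.indicator_univ, hμ.map_one]

theorem not_injective_smul_fst [Nonempty X] (hμ : IsInvariantMean Γ μ) {K : Finset Γ}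
    {σ : X × Bool → Γ} (hσ : ∀ p, σ p ∈ K) : ¬ Injective fun p : X × Bool => σ p • p.1 := by
  intro hinj
  let A : Bool → Set X := fun b => Set.range fun x => σ (x, b) • x
  have hA (b : Bool) : μ ((A b).indicator 1) = 1 :=
    hμ.map_indicator_range_eq_one (fun x => hσ (x, b)) (hinj.comp (Prod.mk_left_injective b))
  have hdisj : Disjoint (A true) (A false) := by
    refine Set.disjoint_left.2 ?_
    rintro _ ⟨x, rfl⟩ ⟨y, hxy⟩
    exact Bool.false_ne_true (congrArg Prod.snd (hinj hxy))
  have hsum := hμ.1 _ _ (Bdd.indicator_one (A true)) (Bdd.indicator_one (A false))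
  have hunion : (A true).indicator (1 : X → ℝ) + (A false).indicator 1 =
      (A true ∪ A false).indicator 1 := by
    rw [Set.indicator_union_of_disjoint hdisj]; rfl
  rw [hunion, hA, hA] at hsum
  linarith [hμ.map_indicator_le_one (A true ∪ A false)]

end IsInvariantMean

section Paradox

variable {Γ X : Type*} [Group Γ] [MulAction Γ X] [DecidableEq X]

lemma one_add_mul_card_le_card_insert_one_smul [DecidableEq Γ] {ε : ℝ} {G : Finset Γ}
    (hG : ∀ F : Finset X, ∃ g ∈ G, ε * #F ≤ #((F.image fun x => g • x) \ F)) (F : Finset X) :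
    (1 + ε) * #F ≤ #(insert 1 G • F) := by
  obtain ⟨g, hg, hgF⟩ := hG F
  rw [image_smul] at hgF
  have hsub : g • F ∪ F ⊆ insert 1 G • F :=
    union_subset (smul_finset_subset_smul (mem_insert_of_mem hg))
      (by simpa using smul_finset_subset_smul (t := F) (mem_insert_self 1 G))
  have hcard := card_le_card hsub
  rw [← card_sdiff_add_card] at hcard
  have hcard' : (#(g • F \ F) : ℝ) + #F ≤ #(insert 1 G • F) := by exact_mod_cast hcard
  linarith

lemma pow_mul_card_le_card_pow_smul [DecidableEq Γ] {c : ℝ} (hc : 0 ≤ c) {S : Finset Γ}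
    (hS : ∀ F : Finset X, c * #F ≤ #(S • F)) (k : ℕ) (F : Finset X) :
    c ^ k * #F ≤ #(S ^ k • F) := by
  induction k with
  | zero => simp
  | succ k ih =>
    calc c ^ (k + 1) * #F = c * (c ^ k * #F) := by ring
      _ ≤ c * #(S ^ k • F) := by gcongr
      _ ≤ #(S • (S ^ k • F)) := hS _
      _ = #(S ^ (k + 1) • F) := by rw [pow_succ', mul_smul]

/-- Hall's marriage theorem, applied to the relation `y ∈ K • {x}` between `X × Bool` and `X`. -/
theorem exists_injective_smul_fst_of_doubling {K : Finset Γ}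
    (hK : ∀ F : Finset X, 2 * #F ≤ #(K • F)) :
    ∃ σ : X × Bool → Γ, (∀ p, σ p ∈ K) ∧ Injective fun p : X × Bool => σ p • p.1 := by
  classical
  obtain ⟨φ, hφinj, hφ⟩ :=
    (all_card_le_biUnion_card_iff_exists_injective fun p : X × Bool => K • {p.1}).1 fun s => by
      calc #s ≤ #(s.image Prod.fst) * #(s.image Prod.snd) :=
            (card_le_card subset_product).trans (card_product _ _).le
        _ ≤ #(s.image Prod.fst) * 2 := by
            gcongr
            simpa using card_le_univ (s.image Prod.snd)
        _ ≤ #(K • s.image Prod.fst) := by rw [mul_comm]; exact hK _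
        _ ≤ #(s.biUnion fun p => K • {p.1}) := card_le_card fun y hy => by
            simp only [Finset.mem_smul, mem_image, mem_biUnion, mem_singleton] at hy ⊢
            obtain ⟨k, hk, _, ⟨p, hp, rfl⟩, rfl⟩ := hy
            exact ⟨p, hp, k, hk, p.1, rfl, rfl⟩
  choose σ hσK hσ using fun p => by simpa [Finset.mem_smul] using hφ p
  exact ⟨σ, hσK, by simpa only [hσ] using hφinj⟩

theorem AmenableAction.exists_folner [Nonempty X] (h : AmenableAction Γ X) {ε : ℝ} (hε : 0 < ε)
    (G : Finset Γ) : ∃ F : Finset X, ∀ g ∈ G, #((F.image fun x => g • x) \ F) < ε * #F := by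
  classical
  by_contra! hG
  obtain ⟨k, hk⟩ := pow_unbounded_of_one_lt 2 (lt_add_of_pos_right 1 hε)
  have hdoubling (F : Finset X) : 2 * #F ≤ #(insert 1 G ^ k • F) := by
    have hexp := pow_mul_card_le_card_pow_smul (by linarith)
      (one_add_mul_card_le_card_insert_one_smul hG) k F
    have : (2 : ℝ) * #F ≤ (1 + ε) ^ k * #F := by gcongr
    exact_mod_cast this.trans hexp
  obtain ⟨μ, hμ⟩ := h
  obtain ⟨σ, hσ, hinj⟩ := exists_injective_smul_fst_of_doubling hdoubling
  exact hμ.not_injective_smul_fst hσ hinj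

end Paradox

section FolnerMean

lemma abs_sum_sub_sum_le_of_card_eq {α : Type*} [DecidableEq α] {A B : Finset α}
    (hAB : #A = #B) {f : α → ℝ} {C : ℝ} (hf : ∀ x, |f x| ≤ C) :
    |∑ x ∈ A, f x - ∑ x ∈ B, f x| ≤ 2 * C * #(A \ B) := by
  have hsum (s : Finset α) : |∑ x ∈ s, f x| ≤ C * #s := by
    simpa [mul_comm] using
      (abs_sum_le_sum_abs f s).trans (sum_le_card_nsmul s _ C fun x _ => hf x)
  rw [← sum_sdiff_sub_sum_sdiff]
  calc _ ≤ |∑ x ∈ A \ B, f x| + |∑ x ∈ B \ A, f x| := abs_sub _ _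
    _ ≤ C * #(A \ B) + C * #(B \ A) := add_le_add (hsum _) (hsum _)
    _ = 2 * C * #(A \ B) := by rw [card_sdiff_comm hAB.symm]; ring

lemma Ultrafilter.tendsto_limUnder_of_abs_le {ι : Type*} (U : Ultrafilter ι) {u : ι → ℝ} {C : ℝ}
    (hu : ∀ i, |u i| ≤ C) : Tendsto u U (𝓝 (limUnder U u)) := by
  obtain ⟨L, -, hL⟩ := (isCompact_Icc (a := -C) (b := C)).ultrafilter_le_nhds (U.map u) <| by
    rw [Ultrafilter.coe_map, le_principal_iff]
    exact mem_map.2 (univ_mem' fun i => abs_le.1 (hu i))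
  exact tendsto_nhds_limUnder ⟨L, hL⟩

variable {Γ X : Type*} [Group Γ] [MulAction Γ X] [DecidableEq X]

lemma abs_expect_comp_smul_sub_expect_le (g : Γ) (F : Finset X) {f : X → ℝ} {C : ℝ}
    (hf : ∀ x, |f x| ≤ C) :
    |𝔼 x ∈ F, f (g • x) - 𝔼 x ∈ F, f x| ≤ 2 * C * (#(g • F \ F) / #F) := by
  rw [← expect_image (MulAction.injective g).injOn, image_smul, expect_eq_sum_div_card,
    expect_eq_sum_div_card, card_smul_finset, ← sub_div, abs_div, Nat.abs_cast, ← mul_div_assoc]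
  gcongr
  exact abs_sum_sub_sum_le_of_card_eq (card_smul_finset g F) hf

theorem amenableAction_of_tendsto {ι : Type*} {l : Filter ι} [l.NeBot] (F : ι → Finset X)
    (hF : ∀ i, (F i).Nonempty)
    (hinv : ∀ g : Γ, Tendsto (fun i => (#(g • F i \ F i) : ℝ) / #(F i)) l (𝓝 0)) :
    AmenableAction Γ X := by
  let U := Ultrafilter.of l
  let avg (f : X → ℝ) (i : ι) : ℝ := 𝔼 x ∈ F i, f x
  have hlim (f : X → ℝ) (hf : Bdd f) : Tendsto (avg f) U (𝓝 (limUnder U (avg f))) := by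
    obtain ⟨C, hC⟩ := hf
    exact U.tendsto_limUnder_of_abs_le fun i =>
      (abs_expect_le _ _).trans (expect_le (hF i) fun x _ => hC x)
  refine ⟨fun f => limUnder U (avg f), fun f g hf hg => ?_, fun c f hf => ?_,
    fun f hf => ⟨?_, ?_⟩, fun g f hf => ?_⟩
  · refine (((hlim f hf).add (hlim g hg)).congr fun i => ?_).limUnder_eq
    simp [avg, expect_add_distrib]
  · refine (((hlim f hf).const_mul c).congr fun i => ?_).limUnder_eq
    simp [avg, mul_expect]
  · obtain ⟨C, hC⟩ := hf
    have hbdd : BddBelow (Set.range f) := ⟨-C, by rintro _ ⟨x, rfl⟩; exact neg_le_of_abs_le (hC x)⟩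
    exact ge_of_tendsto (hlim f ⟨C, hC⟩) (Eventually.of_forall fun i =>
      le_expect (hF i) fun x _ => csInf_le hbdd ⟨x, rfl⟩)
  · obtain ⟨C, hC⟩ := hf
    have hbdd : BddAbove (Set.range f) := ⟨C, by rintro _ ⟨x, rfl⟩; exact le_of_abs_le (hC x)⟩
    exact le_of_tendsto (hlim f ⟨C, hC⟩) (Eventually.of_forall fun i =>
      expect_le (hF i) fun x _ => le_csSup hbdd ⟨x, rfl⟩)
  · obtain ⟨C, hC⟩ := hf
    have hdiff : Tendsto (fun i => avg (fun x => f (g • x)) i - avg f i) l (𝓝 0) :=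
      squeeze_zero_norm (fun i => abs_expect_comp_smul_sub_expect_le g (F i) hC)
        (by simpa using (hinv g).const_mul (2 * C))
    have hlim' : Tendsto (avg fun x => f (g • x)) U (𝓝 (limUnder U (avg f))) := by
      simpa using (hdiff.mono_left (Ultrafilter.of_le l)).add (hlim f ⟨C, hC⟩)
    exact hlim'.limUnder_eq

theorem amenableAction_of_folner
    (h : ∀ ε : ℝ, 0 < ε → ∀ G : Finset Γ, ∃ F : Finset X,
      ∀ g ∈ G, #((F.image fun x => g • x) \ F) < ε * #F) :
    AmenableAction Γ X := by
  classical
  choose F hF using fun p : Finset Γ × ℕ => h (1 / (p.2 + 1)) (by positivity) (insert 1 p.1)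
  simp only [image_smul] at hF
  -- `1 ∈ insert 1 p.1` and `1 • F p \ F p = ∅`, so the strict inequality forces `F p ≠ ∅`.
  have hne (p : Finset Γ × ℕ) : (F p).Nonempty := by
    have h1 := hF p 1 (mem_insert_self 1 p.1)
    rw [one_smul, sdiff_self, bot_eq_empty, card_empty, Nat.cast_zero] at h1
    exact card_pos.1 (by exact_mod_cast pos_of_mul_pos_right h1 (by positivity))
  refine amenableAction_of_tendsto (l := atTop) F hne fun g => ?_
  have hbound : ∀ᶠ p : Finset Γ × ℕ in atTop,
      (#(g • F p \ F p) : ℝ) / #(F p) ≤ 1 / (p.2 + 1) :=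
    (eventually_ge_atTop ({g}, 0)).mono fun p hp =>
      (div_le_iff₀ (by exact_mod_cast (hne p).card_pos)).2
        (hF p g (mem_insert_of_mem (singleton_subset_iff.1 hp.1))).le
  refine squeeze_zero' (Eventually.of_forall fun p => by positivity) hbound ?_
  rw [← prod_atTop_atTop_eq]
  exact tendsto_one_div_add_atTop_nhds_zero_nat.comp tendsto_snd

end FolnerMean

theorem amenableAction_iff_folner_general (Γ X : Type*) [Group Γ]
    [Nonempty X] [MulAction Γ X] [DecidableEq X] :
    AmenableAction Γ X ↔
      ∀ ε : ℝ, 0 < ε → ∀ G : Finset Γ, ∃ F : Finset X,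
        ∀ g ∈ G, ((F.image (fun x => g • x)) \ F).card < ε * F.card :=
  ⟨fun h _ hε G => h.exists_folner hε G, amenableAction_of_folner⟩

/-- Følner's criterion: the action of a countable group `Γ` on a nonempty countable set `X`
is amenable iff for every `ε > 0` and every finite `G ⊆ Γ` there is a finite `F ⊆ X` with
`|(g • F) \ F| < ε • |F|` for all `g ∈ G`. -/
theorem amenableAction_iff_folner (Γ X : Type*) [Group Γ] [Countable Γ]
    [Countable X] [Nonempty X] [MulAction Γ X] [DecidableEq X] :
    AmenableAction Γ X ↔
      ∀ ε : ℝ, 0 < ε → ∀ G : Finset Γ, ∃ F : Finset X,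
        ∀ g ∈ G, ((F.image (fun x => g • x)) \ F).card < ε * F.card :=
  amenableAction_iff_folner_general Γ X
end

section
/- Let π be a group, H a normal subgroup of π, and K a subgroup of H. Then the action of π by left multiplication on the coset space π/K is amenable if and only if the quotient group π/H is an amenable group and the action of H by left multiplication on π/K is amenable. -/
/-! The projection `π ⧸ K → π ⧸ H` is `π`-equivariant, so a `π`-invariant mean on `π ⧸ K`
pushes forward to a mean on `π ⧸ H`, which is invariant under `π ⧸ H`; restricting the same mean
to `H` gives the second half of the forward direction. Conversely, given an `H`-invariant mean
`ν` on `π ⧸ K`, the function `g ↦ ν (f (g • ·))` is constant on cosets of `H`, and averaging it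
with an invariant mean of `π ⧸ H` yields a `π`-invariant mean on `π ⧸ K`. -/

open Set

lemma Bdd.comp {X Y : Type*} {f : Y → ℝ} (hf : Bdd f) (p : X → Y) : Bdd (fun x => f (p x)) :=
  let ⟨C, hC⟩ := hf
  ⟨C, fun x => hC (p x)⟩

lemma bdd_of_forall_mem_Icc {X : Type*} {f : X → ℝ} {a b : ℝ} (h : ∀ x, f x ∈ Icc a b) :
    Bdd f :=
  ⟨max |a| |b|, fun x => abs_le_max_abs_abs (h x).1 (h x).2⟩

lemma le_sInf_range_and_sSup_range_le {X : Type*} [Nonempty X] {f : X → ℝ} {a b : ℝ}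
    (h : ∀ x, f x ∈ Icc a b) : a ≤ sInf (range f) ∧ sSup (range f) ≤ b :=
  ⟨le_csInf (range_nonempty f) (forall_mem_range.mpr fun x => (h x).1),
    csSup_le (range_nonempty f) (forall_mem_range.mpr fun x => (h x).2)⟩

namespace Subgroup

variable {π : Type*} [Group π] {K H : Subgroup π}

lemma quotientMapOfLE_surjective (hKH : K ≤ H) : Function.Surjective (quotientMapOfLE hKH) :=
  fun q => ⟨q.out, by simp⟩

lemma quotientMapOfLE_smul [H.Normal] (hKH : K ≤ H) (g : π) (x : π ⧸ K) :
    quotientMapOfLE hKH (g • x) = (g : π ⧸ H) • quotientMapOfLE hKH x := by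
  induction x using QuotientGroup.induction_on with
  | H x => rfl

end Subgroup

namespace IsInvariantMean

variable {Γ X : Type*} [Group Γ] [MulAction Γ X] {μ : (X → ℝ) → ℝ}

lemma map_add (hμ : IsInvariantMean Γ μ) {f f' : X → ℝ} (hf : Bdd f) (hf' : Bdd f') :
    μ (f + f') = μ f + μ f' :=
  hμ.1 f f' hf hf'

lemma map_smul (hμ : IsInvariantMean Γ μ) (c : ℝ) {f : X → ℝ} (hf : Bdd f) :
    μ (c • f) = c * μ f :=
  hμ.2.1 c f hf

lemma apply_mem_Icc (hμ : IsInvariantMean Γ μ) {f : X → ℝ} (hf : Bdd f) :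
    μ f ∈ Icc (sInf (range f)) (sSup (range f)) :=
  hμ.2.2.1 f hf

lemma smul_apply (hμ : IsInvariantMean Γ μ) (g : Γ) {f : X → ℝ} (hf : Bdd f) :
    μ (fun x => f (g • x)) = μ f :=
  hμ.2.2.2 g f hf

lemma toSubgroup (hμ : IsInvariantMean Γ μ) (S : Subgroup Γ) : IsInvariantMean S μ :=
  ⟨hμ.1, hμ.2.1, hμ.2.2.1, fun s => hμ.2.2.2 s⟩

lemma comp_surjective {Γ' Y : Type*} [Group Γ'] [MulAction Γ' Y] (hμ : IsInvariantMean Γ μ)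
    (φ : Γ →* Γ') (hφ : Function.Surjective φ) (p : X → Y) (hp : Function.Surjective p)
    (hpφ : ∀ (g : Γ) (x : X), p (g • x) = φ g • p x) :
    IsInvariantMean Γ' (fun f : Y → ℝ => μ (f ∘ p)) := by
  refine ⟨fun f f' hf hf' => hμ.map_add (hf.comp p) (hf'.comp p),
    fun c f hf => hμ.map_smul c (hf.comp p), fun f hf => ?_, fun g' f hf => ?_⟩
  · rw [← hp.range_comp f]
    exact hμ.apply_mem_Icc (hf.comp p)
  · obtain ⟨g, rfl⟩ := hφ g'
    simp only [Function.comp_def, ← hpφ]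
    exact hμ.smul_apply g (hf.comp p)

end IsInvariantMean

section CosetAverage

variable {Γ X : Type*} [Group Γ] [MulAction Γ X] (N : Subgroup Γ) (ν : (X → ℝ) → ℝ)

noncomputable def cosetAverage (f : X → ℝ) : Γ ⧸ N → ℝ :=
  fun q => ν (fun x => f (q.out • x))

variable {N ν}

lemma cosetAverage_mk (hν : IsInvariantMean N ν) {f : X → ℝ} (hf : Bdd f) (g : Γ) :
    cosetAverage N ν f g = ν (fun x => f (g • x)) := by
  obtain ⟨n, hn⟩ := QuotientGroup.mk_out_eq_mul N g
  have hfg : Bdd (fun x => f (g • x)) := hf.comp (g • ·)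
  simpa [cosetAverage, hn, mul_smul, Subgroup.smul_def] using hν.smul_apply n hfg

lemma cosetAverage_mem_Icc (hν : IsInvariantMean N ν) {f : X → ℝ} (hf : Bdd f) (q : Γ ⧸ N) :
    cosetAverage N ν f q ∈ Icc (sInf (range f)) (sSup (range f)) := by
  rw [← (MulAction.surjective q.out).range_comp f]
  exact hν.apply_mem_Icc (hf.comp (q.out • ·))

lemma bdd_cosetAverage (hν : IsInvariantMean N ν) {f : X → ℝ} (hf : Bdd f) :
    Bdd (cosetAverage N ν f) :=
  bdd_of_forall_mem_Icc (cosetAverage_mem_Icc hν hf)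

lemma cosetAverage_add (hν : IsInvariantMean N ν) {f f' : X → ℝ} (hf : Bdd f)
    (hf' : Bdd f') : cosetAverage N ν (f + f') = cosetAverage N ν f + cosetAverage N ν f' :=
  funext fun q => hν.map_add (hf.comp (q.out • ·)) (hf'.comp (q.out • ·))

lemma cosetAverage_smul (hν : IsInvariantMean N ν) (c : ℝ) {f : X → ℝ} (hf : Bdd f) :
    cosetAverage N ν (c • f) = c • cosetAverage N ν f :=
  funext fun q => hν.map_smul c (hf.comp (q.out • ·))

lemma cosetAverage_shift [N.Normal] (hν : IsInvariantMean N ν) {f : X → ℝ} (hf : Bdd f)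
    (g : Γ) : cosetAverage N ν (fun x => f (g • x)) =
      fun q => cosetAverage N ν f ((g : Γ ⧸ N) • q) := by
  funext q
  induction q using QuotientGroup.induction_on with
  | H g' =>
    rw [cosetAverage_mk hν (hf.comp (g • ·)), smul_eq_mul, ← QuotientGroup.mk_mul,
      cosetAverage_mk hν hf]
    simp only [mul_smul]

end CosetAverage

namespace AmenableAction

variable {Γ X : Type*} [Group Γ] [MulAction Γ X]

lemma toSubgroup (h : AmenableAction Γ X) (S : Subgroup Γ) : AmenableAction S X :=
  h.imp fun _ hμ => hμ.toSubgroup S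

lemma of_surjective {Γ' Y : Type*} [Group Γ'] [MulAction Γ' Y] (h : AmenableAction Γ X)
    (φ : Γ →* Γ') (hφ : Function.Surjective φ) (p : X → Y) (hp : Function.Surjective p)
    (hpφ : ∀ (g : Γ) (x : X), p (g • x) = φ g • p x) : AmenableAction Γ' Y :=
  let ⟨_, hμ⟩ := h
  ⟨_, hμ.comp_surjective φ hφ p hp hpφ⟩

lemma of_normal (N : Subgroup Γ) [N.Normal] (hN : AmenableAction N X)
    (hQ : AmenableGroup (Γ ⧸ N)) : AmenableAction Γ X := by
  obtain ⟨ν, hν⟩ := hN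
  obtain ⟨m, hm⟩ := hQ
  refine ⟨fun f => m (cosetAverage N ν f), fun f f' hf hf' => ?_, fun c f hf => ?_,
    fun f hf => ?_, fun g f hf => ?_⟩
  · simp only [cosetAverage_add hν hf hf']
    exact hm.map_add (bdd_cosetAverage hν hf) (bdd_cosetAverage hν hf')
  · simp only [cosetAverage_smul hν c hf]
    exact hm.map_smul c (bdd_cosetAverage hν hf)
  · obtain ⟨hinf, hsup⟩ := le_sInf_range_and_sSup_range_le (cosetAverage_mem_Icc hν hf)
    obtain ⟨hlower, hupper⟩ := hm.apply_mem_Icc (bdd_cosetAverage hν hf)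
    exact ⟨hinf.trans hlower, hupper.trans hsup⟩
  · simp only [cosetAverage_shift hν hf g]
    exact hm.smul_apply (g : Γ ⧸ N) (bdd_cosetAverage hν hf)

end AmenableAction

/-- For `K ≤ H ≤ π` with `H` normal in `π`, the action of `π` on `π ⧸ K` is amenable iff
the quotient group `π ⧸ H` is amenable and the action of `H` on `π ⧸ K` is amenable. -/
theorem amenableAction_iff_quotient_amenable_and (π : Type*) [Group π]
    (K H : Subgroup π) (hKH : K ≤ H) [H.Normal] :
    AmenableAction π (π ⧸ K) ↔ AmenableGroup (π ⧸ H) ∧ AmenableAction H (π ⧸ K) := by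
  constructor
  · intro h
    exact ⟨h.of_surjective (QuotientGroup.mk' H) (QuotientGroup.mk'_surjective H)
      (Subgroup.quotientMapOfLE hKH) (Subgroup.quotientMapOfLE_surjective hKH)
      (Subgroup.quotientMapOfLE_smul hKH), h.toSubgroup H⟩
  · rintro ⟨hQ, hH⟩
    exact hH.of_normal H hQ
end
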